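/- Let MV₂(I) be the set consisting of all 2 × 2 matrices A with entries in [0,1] satisfying min(A₀ⱼ, A₁ⱼ) = 0 for each column j, together with the all-ones matrix [[1,1],[1,1]]. Then MV₂(I) is closed under the product ∘ defined by (A ∘ B)_{ik} = min over j of min(A_{ij} + B_{jk}, 1): for all A, B ∈ MV₂(I), A ∘ B ∈ MV₂(I). -/

import Mathlib

/-- `MV₂(I)`: `2 × 2` matrices with entries in `[0,1]` whose every column has
meet zero, together with the all-ones matrix. -/
def MV2 : Set (Matrix (Fin 2) (Fin 2) ℝ) :=
  {A | (∀ i j, A i j ∈ Set.Icc (0 : ℝ) 1) ∧ ∀ j, min (A 0 j) (A 1 j) = 0} ∪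
    {Matrix.of fun _ _ => (1 : ℝ)}

/-- The row-by-column product in the semiring `([0,1], ∧, ⊕)`:
`(A ∘ B)_{ik} = ∧ⱼ min(A_{ij} + B_{jk}, 1)`. -/
def mvMul (A B : Matrix (Fin 2) (Fin 2) ℝ) : Matrix (Fin 2) (Fin 2) ℝ :=
  Matrix.of fun i k => min (min (A i 0 + B 0 k) 1) (min (A i 1 + B 1 k) 1)

/-! A column of meet zero has a zero entry, so the product has a zero in column `k`:
follow a zero `B j k` back to a zero `A i j` in column `j` of `A`, and then
`(A ∘ B) i k ≤ A i j + B j k = 0`. Against the all-ones matrix every truncated sum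
of nonnegative entries saturates at `1`. -/

namespace MV2

variable {A B : Matrix (Fin 2) (Fin 2) ℝ}

lemma exists_eq_zero_of_min_eq_zero {j : Fin 2} (h : min (A 0 j) (A 1 j) = 0) :
    ∃ i, A i j = 0 := by
  rcases min_choice (A 0 j) (A 1 j) with h' | h'
  · exact ⟨0, h' ▸ h⟩
  · exact ⟨1, h' ▸ h⟩

lemma nonneg_of_mem (hA : A ∈ MV2) (i j : Fin 2) : 0 ≤ A i j := by
  rcases hA with ⟨hA, -⟩ | rfl
  · exact (hA i j).1
  · exact zero_le_one

lemma mvMul_apply_le_add (i j k : Fin 2) : mvMul A B i k ≤ A i j + B j k := by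
  fin_cases j
  · exact min_le_of_left_le (min_le_left _ _)
  · exact min_le_of_right_le (min_le_left _ _)

lemma mvMul_apply_le_one (i k : Fin 2) : mvMul A B i k ≤ 1 :=
  min_le_of_left_le (min_le_right _ _)

lemma mvMul_apply_nonneg (hA : ∀ i j, 0 ≤ A i j) (hB : ∀ i j, 0 ≤ B i j) (i k : Fin 2) :
    0 ≤ mvMul A B i k := by
  simp only [mvMul, Matrix.of_apply, le_min_iff]
  exact ⟨⟨add_nonneg (hA i 0) (hB 0 k), zero_le_one⟩,
    add_nonneg (hA i 1) (hB 1 k), zero_le_one⟩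

lemma mvMul_ones_right (hA : ∀ i j, 0 ≤ A i j) :
    mvMul A (Matrix.of fun _ _ => 1) = Matrix.of fun _ _ => 1 := by
  ext i k
  simp [mvMul, hA]

lemma mvMul_ones_left (hB : ∀ i j, 0 ≤ B i j) :
    mvMul (Matrix.of fun _ _ => 1) B = Matrix.of fun _ _ => 1 := by
  ext i k
  simp [mvMul, hB]

lemma min_mvMul_apply_eq_zero (hA : ∀ j, min (A 0 j) (A 1 j) = 0)
    (hB : ∀ k, min (B 0 k) (B 1 k) = 0) (hA₀ : ∀ i j, 0 ≤ A i j)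
    (hB₀ : ∀ i j, 0 ≤ B i j) (k : Fin 2) :
    min (mvMul A B 0 k) (mvMul A B 1 k) = 0 := by
  obtain ⟨j, hj⟩ := exists_eq_zero_of_min_eq_zero (hB k)
  obtain ⟨i, hi⟩ := exists_eq_zero_of_min_eq_zero (hA j)
  have hik : mvMul A B i k ≤ 0 := (mvMul_apply_le_add i j k).trans_eq (by rw [hi, hj, add_zero])
  refine le_antisymm ?_ <|
    le_min (mvMul_apply_nonneg hA₀ hB₀ 0 k) (mvMul_apply_nonneg hA₀ hB₀ 1 k)
  fin_cases i
  · exact min_le_of_left_le hik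
  · exact min_le_of_right_le hik

end MV2

open MV2 in
/-- `MV₂(I)` is closed under the product `∘`. -/
theorem MV2_mul_closed (A B : Matrix (Fin 2) (Fin 2) ℝ)
    (hA : A ∈ MV2) (hB : B ∈ MV2) : mvMul A B ∈ MV2 := by
  have hA₀ := nonneg_of_mem hA
  have hB₀ := nonneg_of_mem hB
  rcases hB with ⟨-, hBcol⟩ | rfl
  · rcases hA with ⟨-, hAcol⟩ | rfl
    · exact Or.inl ⟨fun i k => ⟨mvMul_apply_nonneg hA₀ hB₀ i k, mvMul_apply_le_one i k⟩,
        min_mvMul_apply_eq_zero hAcol hBcol hA₀ hB₀⟩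
    · exact Or.inr (mvMul_ones_left hB₀)
  · exact Or.inr (mvMul_ones_right hA₀)
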